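/- For every ε with 0 ≤ ε < 1, the function u(θ,φ) = cos θ satisfies Δ₁ u = -2·u exactly (with no order-ε⁴ remainder) at every point (θ,φ) with 0 < θ < π and φ ∈ ℝ. -/

import Mathlib

open Real

/-- The truncated (first order in `ε²`) Finslerian Laplace operator, acting on a function
`u : ℝ → ℝ → ℝ` of the angular variables `(θ, φ)`. -/
noncomputable def truncLaplacian (ε : ℝ) (u : ℝ → ℝ → ℝ) (θ φ : ℝ) : ℝ :=
  ((4 - 5 * ε ^ 2 * sin θ ^ 2) / (4 * sin θ ^ 2)) * deriv (deriv (u θ)) φ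
  + (1 - 3 / 4 * ε ^ 2 * sin θ ^ 2) * deriv (deriv (fun t => u t φ)) θ
  + (cos θ / sin θ) * (1 + 3 / 4 * ε ^ 2 * sin θ ^ 2) * deriv (fun t => u t φ) θ

/-! For `u = cos θ` the `ε²`-corrections of the two `θ`-terms are
`(3/4) ε² sin²θ cos θ` and `cot θ · (3/4) ε² sin²θ · (-sin θ)`, which cancel exactly; what remains
is the round Laplacian `-cos θ - cos θ`. -/

theorem truncLaplacian_zonal (ε : ℝ) (f : ℝ → ℝ) (θ φ : ℝ) :
    truncLaplacian ε (fun t _ => f t) θ φ =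
      (1 - 3 / 4 * ε ^ 2 * sin θ ^ 2) * deriv (deriv f) θ
        + cos θ / sin θ * (1 + 3 / 4 * ε ^ 2 * sin θ ^ 2) * deriv f θ := by
  simp only [truncLaplacian, deriv_const', mul_zero, zero_add]

theorem truncLaplacian_cos_of_sin_ne_zero (ε : ℝ) {θ : ℝ} (φ : ℝ) (hsin : sin θ ≠ 0) :
    truncLaplacian ε (fun t _ => cos t) θ φ = -2 * cos θ := by
  rw [truncLaplacian_zonal, deriv_cos', deriv.fun_neg, Real.deriv_sin]
  field_simp
  ring

theorem truncLaplacian_cos_eigen_general (ε : ℝ)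
    (θ φ : ℝ) (hθ0 : 0 < θ) (hθπ : θ < Real.pi) :
    truncLaplacian ε (fun θ' _ => Real.cos θ') θ φ = -2 * Real.cos θ :=
  truncLaplacian_cos_of_sin_ne_zero ε φ (sin_pos_of_pos_of_lt_pi hθ0 hθπ).ne'

/-- `cos θ` satisfies `Δ₁ u = -2·u` exactly, for every `0 ≤ ε < 1`. -/
theorem truncLaplacian_cos_eigen (ε : ℝ) (hε0 : 0 ≤ ε) (hε1 : ε < 1)
    (θ φ : ℝ) (hθ0 : 0 < θ) (hθπ : θ < Real.pi) :
    truncLaplacian ε (fun θ' _ => Real.cos θ') θ φ = -2 * Real.cos θ :=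
  truncLaplacian_cos_eigen_general ε θ φ hθ0 hθπ
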